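/- An R-module E is Σ-RD-injective (i.e., the direct sum E^{(I)} of I many copies of E is RD-injective for every set I) if and only if E^{(κ)} is RD-injective. -/

import Mathlib

universe u

/-- `A` is an RD-submodule of its ambient module: for every `r : R`,
`A ∩ r • M = r • A`. -/
def IsRDSubmodule {R : Type*} [Ring R] {M : Type*} [AddCommGroup M] [Module R M]
    (A : Submodule R M) : Prop :=
  ∀ (r : R) (x : M), x ∈ A → (∃ b : M, r • b = x) → ∃ a : M, a ∈ A ∧ r • a = x

/-- An RD-embedding is an injective linear map whose image is an RD-submodule
of its codomain. -/
def IsRDEmbedding {R : Type*} [Ring R] {M N : Type*} [AddCommGroup M] [Module R M]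
    [AddCommGroup N] [Module R N] (f : M →ₗ[R] N) : Prop :=
  Function.Injective f ∧ IsRDSubmodule (LinearMap.range f)

/-- `E` is RD-injective: every homomorphism `g : A → E` extends along every
RD-embedding `f : A → B`. -/
def RDInjective (R : Type u) [Ring R] (E : Type u) [AddCommGroup E] [Module R E] : Prop :=
  ∀ (A B : Type u) [AddCommGroup A] [Module R A] [AddCommGroup B] [Module R B]
    (f : A →ₗ[R] B), IsRDEmbedding f →
    ∀ g : A →ₗ[R] E, ∃ h : B →ₗ[R] E, h.comp f = g

/-!
A module `N` with the descending chain condition on pp-definable subgroups (solution sets of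
finite linear systems in one free variable) is injective for pure embeddings. By Zorn's lemma it
suffices to extend a partial map preserving the solvability of finite systems by one element `p`:
the conditions such a map imposes on the image of `p` are cosets of pp-definable subgroups, closed
under finite intersections, so one with the smallest subgroup exists, and any solution of it
solves all of them.

If `E^(J)` is RD-injective with `J` infinite, the RD-embedding `E^(J) → E^J` splits, and applying
the retraction to a sequence witnessing a strictly descending chain of pp-definable subgroups of
`E` produces an element of `E^(J)` with infinitely many nonzero coordinates; so `E` has the chain
condition, and with it every `E^(I)`. As `E^(I)` is pure in the RD-injective module `E^I`, it is a
direct summand of it.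
-/

open DirectSum

/-- `F` encodes the pp-formula `∃ w, t w + s x = 0` in the free variable `x`; `F.Holds d x` is
the inhomogeneous `∃ w, t w + s x = d`. -/
structure PPFormula (R : Type u) [Ring R] : Type (max u 1) where
  ι : Type
  κ : Type
  [fintypeι : Fintype ι]
  [fintypeκ : Fintype κ]
  t : Matrix κ ι R
  s : κ → R

attribute [instance] PPFormula.fintypeι PPFormula.fintypeκ

namespace PPFormula

variable {R : Type u} [Ring R] {F G : PPFormula R}
variable {M M₂ : Type*} [AddCommGroup M] [Module R M] [AddCommGroup M₂] [Module R M₂]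

def Holds (F : PPFormula R) (d : F.κ → M) (x : M) : Prop :=
  ∃ w : F.ι → M, ∀ j, ∑ k, F.t j k • w k + F.s j • x = d j

theorem Holds.add {d e : F.κ → M} {x y : M} (hx : F.Holds d x) (hy : F.Holds e y) :
    F.Holds (d + e) (x + y) := by
  obtain ⟨w, hw⟩ := hx
  obtain ⟨v, hv⟩ := hy
  refine ⟨w + v, fun j => ?_⟩
  simp only [Pi.add_apply, smul_add, Finset.sum_add_distrib, ← hw j, ← hv j]
  abel

theorem Holds.neg {d : F.κ → M} {x : M} (hx : F.Holds d x) : F.Holds (-d) (-x) := by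
  obtain ⟨w, hw⟩ := hx
  exact ⟨-w, fun j => by simp [← hw j]; abel⟩

theorem Holds.sub {d e : F.κ → M} {x y : M} (hx : F.Holds d x) (hy : F.Holds e y) :
    F.Holds (d - e) (x - y) := by
  simpa only [sub_eq_add_neg] using hx.add hy.neg

theorem Holds.map {d : F.κ → M} {x : M} (hx : F.Holds d x) (f : M →ₗ[R] M₂) :
    F.Holds (f ∘ d) (f x) := by
  obtain ⟨w, hw⟩ := hx
  exact ⟨f ∘ w, fun j => by simp [← hw j]⟩

variable (F) in
def sol (M : Type*) [AddCommGroup M] [Module R M] : AddSubgroup M where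
  carrier := {x | F.Holds 0 x}
  zero_mem' := ⟨0, fun j => by simp⟩
  add_mem' hx hy := by simpa using Holds.add hx hy
  neg_mem' hx := by simpa using Holds.neg hx

theorem mem_sol {x : M} : x ∈ F.sol M ↔ F.Holds 0 x := Iff.rfl

theorem map_mem_sol {x : M} (hx : x ∈ F.sol M) (f : M →ₗ[R] M₂) : f x ∈ F.sol M₂ := by
  simpa [mem_sol] using hx.map f

-- Reducible, so that `Fintype.sum_sum_type` applies to sums over `(F.and G).ι`.
variable (F G) in
@[reducible] def and : PPFormula R where
  ι := F.ι ⊕ G.ι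
  κ := F.κ ⊕ G.κ
  t := Matrix.fromBlocks F.t 0 0 G.t
  s := Sum.elim F.s G.s

theorem holds_and_iff {d : F.κ → M} {e : G.κ → M} {x : M} :
    (F.and G).Holds (Sum.elim d e) x ↔ F.Holds d x ∧ G.Holds e x := by
  constructor
  · rintro ⟨w, hw⟩
    exact ⟨⟨w ∘ Sum.inl, fun j => by simpa [and, Fintype.sum_sum_type] using hw (.inl j)⟩,
      ⟨w ∘ Sum.inr, fun j => by simpa [and, Fintype.sum_sum_type] using hw (.inr j)⟩⟩
  · rintro ⟨⟨w, hw⟩, ⟨v, hv⟩⟩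
    exact ⟨Sum.elim w v, by rintro (j | j) <;> simp [Fintype.sum_sum_type, hw, hv]⟩

theorem sol_and : (F.and G).sol M = F.sol M ⊓ G.sol M := by
  ext x
  simpa [mem_sol] using holds_and_iff (F := F) (G := G) (d := 0) (e := 0) (x := x)

theorem mem_sol_pi_iff {I : Type*} {E : I → Type*} [∀ i, AddCommGroup (E i)]
    [∀ i, Module R (E i)] {z : ∀ i, E i} : z ∈ F.sol (∀ i, E i) ↔ ∀ i, z i ∈ F.sol (E i) := by
  refine ⟨fun hz i => map_mem_sol hz (LinearMap.proj i), fun h => ?_⟩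
  choose w hw using h
  exact ⟨fun k i => w i k, fun j => funext fun i => by simpa [Finset.sum_apply] using hw i j⟩

theorem mem_sol_directSum_iff {I : Type*} {E : I → Type*} [∀ i, AddCommGroup (E i)]
    [∀ i, Module R (E i)] {z : ⨁ i, E i} : z ∈ F.sol (⨁ i, E i) ↔ ∀ i, z i ∈ F.sol (E i) := by
  classical
  refine ⟨fun hz i => map_mem_sol hz (component R I E i), fun h => ?_⟩
  rw [← sum_support_of z]
  exact AddSubgroup.sum_mem _ fun i _ => map_mem_sol (h i) (lof R I E i)

end PPFormula

def DCCOnPPSubgroups (R : Type u) [Ring R] (M : Type*) [AddCommGroup M] [Module R M] : Prop :=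
  WellFounded fun F G : PPFormula R => F.sol M < G.sol M

theorem DCCOnPPSubgroups.directSum {R : Type u} [Ring R] {E : Type*} [AddCommGroup E] [Module R E]
    (hE : DCCOnPPSubgroups R E) (I : Type*) : DCCOnPPSubgroups R (⨁ _ : I, E) := by
  classical
  refine Subrelation.wf (fun {F G} hFG => ?_) hE
  obtain ⟨hle, z, hzG, hzF⟩ := SetLike.lt_iff_le_and_exists.1 hFG
  rw [PPFormula.mem_sol_directSum_iff] at hzG hzF
  obtain ⟨i, hi⟩ := not_forall.1 hzF
  refine SetLike.lt_iff_le_and_exists.2 ⟨fun x hx => ?_, z i, hzG i, hi⟩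
  have hxG := PPFormula.mem_sol_directSum_iff.1 (hle (PPFormula.map_mem_sol hx
    (lof R I (fun _ => E) i))) i
  rwa [lof_apply] at hxG

section RDInjective

variable {R : Type u} [Ring R] {E : Type u} [AddCommGroup E] [Module R E]

theorem RDInjective.of_retract {M : Type u} [AddCommGroup M] [Module R M] (hM : RDInjective R M)
    (i : E →ₗ[R] M) (p : M →ₗ[R] E) (hpi : p ∘ₗ i = LinearMap.id) : RDInjective R E := by
  intro A B _ _ _ _ f hf g
  obtain ⟨h, hh⟩ := hM A B f hf (i ∘ₗ g)
  refine ⟨p ∘ₗ h, ?_⟩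
  rw [LinearMap.comp_assoc, hh, ← LinearMap.comp_assoc, hpi, LinearMap.id_comp]

theorem RDInjective.pi (hE : RDInjective R E) (I : Type u) : RDInjective R (I → E) := by
  intro A B _ _ _ _ f hf g
  choose h hh using fun i => hE A B f hf (LinearMap.proj i ∘ₗ g)
  exact ⟨LinearMap.pi h, LinearMap.ext fun a => funext fun i => LinearMap.congr_fun (hh i) a⟩

end RDInjective

namespace LinearMap

variable {R : Type*} [Ring R] {N P : Type*} [AddCommGroup N] [Module R N] [AddCommGroup P]
  [Module R P]

def IsPure (f : N →ₗ[R] P) : Prop :=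
  ∀ {ι κ : Type} [Fintype ι] [Fintype κ] (t : Matrix κ ι R) (u : κ → N),
    (∃ q : ι → P, ∀ j, ∑ k, t j k • q k = f (u j)) → ∃ x : ι → N, ∀ j, ∑ k, t j k • x k = u j

theorem IsPure.injective {f : N →ₗ[R] P} (hf : f.IsPure) : Function.Injective f := by
  refine (injective_iff_map_eq_zero f).2 fun n hn => ?_
  obtain ⟨x, hx⟩ := hf (ι := Empty) (κ := Unit) 0 (fun _ => n) ⟨isEmptyElim, fun _ => by simp [hn]⟩
  simpa using (hx ()).symm

theorem IsPure.isRDEmbedding {f : N →ₗ[R] P} (hf : f.IsPure) : IsRDEmbedding f := by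
  refine ⟨hf.injective, ?_⟩
  rintro r _ ⟨n, rfl⟩ ⟨b, hb⟩
  obtain ⟨x, hx⟩ := hf (ι := Unit) (κ := Unit) (fun _ _ => r) (fun _ => n)
    ⟨fun _ => b, fun _ => by simpa using hb⟩
  exact ⟨f (x ()), mem_range_self f _, by simpa using congrArg f (hx ())⟩

end LinearMap

namespace DirectSum

variable {R : Type*} [Ring R] {I : Type*} {E : I → Type*} [∀ i, AddCommGroup (E i)]
  [∀ i, Module R (E i)]

variable (R) in
def truncate [DecidableEq I] (T : Finset I) : (∀ i, E i) →ₗ[R] ⨁ i, E i :=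
  ∑ i ∈ T, lof R I E i ∘ₗ LinearMap.proj i

theorem truncate_apply [DecidableEq I] (T : Finset I) (z : ∀ i, E i) (i : I) :
    truncate R T z i = if i ∈ T then z i else 0 := by
  simp only [truncate, LinearMap.coe_sum, Finset.sum_apply, LinearMap.comp_apply,
    LinearMap.proj_apply, DirectSum.sum_apply, lof_eq_of]
  split_ifs with hi
  · rw [Finset.sum_eq_single i (fun j _ hj => of_eq_of_ne _ _ _ hj.symm) (absurd hi), of_eq_same]
  · exact Finset.sum_eq_zero fun j hj => of_eq_of_ne _ _ _ (ne_of_mem_of_not_mem hj hi).symm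

theorem truncate_coeFnLinearMap [DecidableEq I] [∀ i (x : E i), Decidable (x ≠ 0)]
    {T : Finset I} {z : ⨁ i, E i} (hz : z.support ⊆ T) : truncate R T (coeFnLinearMap R z) = z := by
  ext i
  rw [truncate_apply, coeFnLinearMap_apply]
  split_ifs with hi
  · rfl
  · exact (DFinsupp.notMem_support_iff.1 fun h => hi (hz h)).symm

theorem isPure_coeFnLinearMap : (coeFnLinearMap R (M := E)).IsPure := by
  classical
  rintro ι κ _ _ t u ⟨q, hq⟩
  let T := Finset.univ.biUnion fun j => (u j).support
  refine ⟨fun k => truncate R T (q k), fun j => ?_⟩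
  calc ∑ k, t j k • truncate R T (q k) = truncate R T (∑ k, t j k • q k) := by simp
    _ = u j := by
      rw [hq j]
      exact truncate_coeFnLinearMap (Finset.subset_biUnion_of_mem (fun j => (u j).support)
        (Finset.mem_univ j))

end DirectSum

theorem DCCOnPPSubgroups.of_rdInjective_directSum {R : Type u} [Ring R] {E : Type u}
    [AddCommGroup E] [Module R E] {J : Type u} [Infinite J]
    (hE : RDInjective R (⨁ _ : J, E)) : DCCOnPPSubgroups R E := by
  classical
  refine wellFounded_iff_isEmpty_descending_chain.2 ⟨fun ⟨F, hF⟩ => ?_⟩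
  have hanti : Antitone fun n => (F n).sol E := antitone_nat_of_succ_le fun n => (hF n).le
  choose a ha ha' using fun n => SetLike.exists_of_lt (hF n)
  obtain ⟨ρ, hρ⟩ := hE _ _ _ isPure_coeFnLinearMap.isRDEmbedding LinearMap.id
  let e := Infinite.natEmbedding J
  let A : J → E := Function.extend e a 0
  obtain ⟨n, hn⟩ := Infinite.exists_notMem_finset ((ρ A).support.preimage e e.injective.injOn)
  let T := (Finset.range (n + 1)).map e
  -- `A` minus its first `n + 1` coordinates lies in `F (n + 1)`, hence so does its image under `ρ`,
  -- whose coordinate at `e n` is `-a n`.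
  have htail : A - coeFnLinearMap R (truncate R T A) ∈ (F (n + 1)).sol (J → E) := by
    refine PPFormula.mem_sol_pi_iff.2 fun j => ?_
    simp only [Pi.sub_apply, coeFnLinearMap_apply, truncate_apply]
    split_ifs with hj
    · simp
    by_cases hje : ∃ m, e m = j
    · obtain ⟨m, rfl⟩ := hje
      have hm : n + 1 ≤ m := by simpa [T] using hj
      simpa [A, e.injective.extend_apply] using hanti hm (ha m)
    · simp [A, Function.extend_apply' _ _ _ hje]
  have hρ' (y : ⨁ _ : J, E) : ρ (coeFnLinearMap R y) = y := LinearMap.congr_fun hρ y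
  have h := PPFormula.mem_sol_directSum_iff.1 (PPFormula.map_mem_sol htail ρ) (e n)
  rw [map_sub, hρ', DirectSum.sub_apply, truncate_apply, if_pos (by simp [T]),
    show ρ A (e n) = 0 by simpa using hn, zero_sub, neg_mem_iff] at h
  exact ha' n (by simpa [A, e.injective.extend_apply] using h)

namespace LinearPMap

variable {R : Type u} [Ring R] {M P N : Type*} [AddCommGroup M] [Module R M] [AddCommGroup P]
  [Module R P] [AddCommGroup N] [Module R N]

noncomputable def ofKerLE (π : M →ₗ[R] P) (l : M →ₗ[R] N) (h : LinearMap.ker π ≤ LinearMap.ker l) :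
    P →ₗ.[R] N :=
  ⟨LinearMap.range π, (LinearMap.ker π).liftQ l h ∘ₗ π.quotKerEquivRange.symm.toLinearMap⟩

theorem ofKerLE_apply {π : M →ₗ[R] P} {l : M →ₗ[R] N} (h : LinearMap.ker π ≤ LinearMap.ker l)
    {y : (ofKerLE π l h).domain} {z : M} (hz : π z = y) : ofKerLE π l h y = l z := by
  obtain rfl : y = ⟨π z, LinearMap.mem_range_self π z⟩ := Subtype.ext hz.symm
  simp [ofKerLE, LinearMap.quotKerEquivRange_symm_apply_image]

def PreservesSolvability (φ : P →ₗ.[R] N) : Prop :=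
  ∀ {ι κ : Type} [Fintype ι] [Fintype κ] (t : Matrix κ ι R) (u : κ → φ.domain),
    (∃ q : ι → P, ∀ j, ∑ k, t j k • q k = u j) → ∃ x : ι → N, ∀ j, ∑ k, t j k • x k = φ (u j)

theorem PreservesSolvability.sSup {c : Set (P →ₗ.[R] N)} (hne : c.Nonempty)
    (hc : DirectedOn (· ≤ ·) c) (h : ∀ φ ∈ c, φ.PreservesSolvability) :
    (LinearPMap.sSup c hc).PreservesSolvability := by
  classical
  intro ι κ _ _ t u hu
  obtain ⟨φ, hφc, hφ⟩ : ∃ φ ∈ c, ∀ j, (u j : P) ∈ φ.domain := by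
    obtain ⟨φ, hφc, hφ⟩ := DirectedOn.exists_mem_subset_of_finset_subset_biUnion hne
      (f := fun φ => (φ.domain : Set P)) (hc.mono fun _ _ h => h.1)
      (s := Finset.univ.image fun j => (u j : P)) (by
        simpa [Set.subset_def] using fun j => (mem_domain_sSup_iff hne hc).1 (u j).2)
    exact ⟨φ, hφc, fun j => hφ (by simp)⟩
  obtain ⟨x, hx⟩ := h φ hφc t (fun j => ⟨u j, hφ j⟩) hu
  exact ⟨x, fun j => (hx j).trans (LinearPMap.sSup_apply hc hφc _).symm⟩

variable {φ : P →ₗ.[R] N} {p : P}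

/-- A pp-formula satisfied by `p` with parameters `u` in `φ.domain`: an extension of `φ` to `p` must
send `p` to an element satisfying it with the parameters `φ ∘ u`. -/
structure PPCondition (φ : P →ₗ.[R] N) (p : P) where
  F : PPFormula R
  q : F.ι → P
  u : F.κ → φ.domain
  eq : ∀ j, ∑ k, F.t j k • q k + F.s j • p = u j

namespace PPCondition

def SatisfiedBy (c : PPCondition φ p) (x : N) : Prop :=
  c.F.Holds (fun j => φ (c.u j)) x

def and (c d : PPCondition φ p) : PPCondition φ p where
  F := c.F.and d.F
  q := Sum.elim c.q d.q
  u := Sum.elim c.u d.u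
  eq := by rintro (j | j) <;> simp [Fintype.sum_sum_type, c.eq, d.eq]

theorem satisfiedBy_and_iff {c d : PPCondition φ p} {x : N} :
    (c.and d).SatisfiedBy x ↔ c.SatisfiedBy x ∧ d.SatisfiedBy x := by
  have hu : (fun j => φ ((c.and d).u j)) = Sum.elim (fun j => φ (c.u j)) fun j => φ (d.u j) := by
    ext (j | j) <;> rfl
  rw [SatisfiedBy, hu]
  exact PPFormula.holds_and_iff

theorem exists_satisfiedBy (hφ : φ.PreservesSolvability) (c : PPCondition φ p) :
    ∃ x, c.SatisfiedBy x := by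
  obtain ⟨x, hx⟩ := hφ (Matrix.of fun j => Sum.elim (c.F.t j) fun (_ : Unit) => c.F.s j) c.u
    ⟨Sum.elim c.q fun _ => p, fun j => by simp [Fintype.sum_sum_type, c.eq]⟩
  exact ⟨x (.inr ()), x ∘ .inl, fun j => by simpa [Fintype.sum_sum_type] using hx j⟩

end PPCondition

theorem PreservesSolvability.exists_forall_satisfiedBy (hN : DCCOnPPSubgroups R N)
    (hφ : φ.PreservesSolvability) (p : P) : ∃ x, ∀ c : PPCondition φ p, c.SatisfiedBy x := by
  obtain ⟨m, -, hm⟩ := (InvImage.wf (PPCondition.F (φ := φ) (p := p)) hN).has_min Set.univ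
    ⟨⟨⟨Empty, Empty, 0, 0⟩, isEmptyElim, isEmptyElim, isEmptyElim⟩, trivial⟩
  have hmin (c : PPCondition φ p) : m.F.sol N ≤ c.F.sol N := by
    have hcm : ¬ (c.F.and m.F).sol N < m.F.sol N := hm (c.and m) trivial
    rw [PPFormula.sol_and] at hcm
    exact (not_lt_iff_le_imp_ge.1 hcm inf_le_right).trans inf_le_left
  obtain ⟨x, hx⟩ := m.exists_satisfiedBy hφ
  refine ⟨x, fun c => ?_⟩
  obtain ⟨y, hy⟩ := (c.and m).exists_satisfiedBy hφ
  obtain ⟨hyc, hym⟩ := PPCondition.satisfiedBy_and_iff.1 hy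
  have hxy : x - y ∈ c.F.sol N := hmin c (by simpa [PPFormula.mem_sol] using hx.sub hym)
  simpa [PPCondition.SatisfiedBy] using hyc.add (PPFormula.mem_sol.1 hxy)

theorem exists_solution_of_forall_satisfiedBy {x₀ : N}
    (hx₀ : ∀ c : PPCondition φ p, c.SatisfiedBy x₀) {ι κ : Type} [Fintype ι] [Fintype κ]
    (t : Matrix κ ι R) (q : ι → P) (v : κ → φ.domain) (r : κ → R)
    (h : ∀ j, ∑ k, t j k • q k = v j + r j • p) :
    ∃ w : ι → N, ∀ j, ∑ k, t j k • w k = φ (v j) + r j • x₀ := by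
  obtain ⟨w, hw⟩ := hx₀ ⟨⟨ι, κ, t, -r⟩, q, v, fun j => by simp [h j]⟩
  exact ⟨w, fun j => by simpa [← sub_eq_add_neg, sub_eq_iff_eq_add] using hw j⟩

theorem PreservesSolvability.exists_extension (hN : DCCOnPPSubgroups R N)
    (hφ : φ.PreservesSolvability) (p : P) :
    ∃ ψ : P →ₗ.[R] N, φ ≤ ψ ∧ p ∈ ψ.domain ∧ ψ.PreservesSolvability := by
  obtain ⟨x₀, hx₀⟩ := hφ.exists_forall_satisfiedBy hN p
  -- The extension sends `v + r • p` to `φ v + r • x₀`.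
  let π : φ.domain × R →ₗ[R] P := φ.domain.subtype.coprod (LinearMap.toSpanSingleton R P p)
  let l : φ.domain × R →ₗ[R] N := φ.toFun.coprod (LinearMap.toSpanSingleton R N x₀)
  have hker : LinearMap.ker π ≤ LinearMap.ker l := by
    rintro ⟨v, r⟩ hz
    obtain ⟨w, hw⟩ := exists_solution_of_forall_satisfiedBy hx₀ (ι := Empty) (κ := Unit) 0
      isEmptyElim (fun _ => v) (fun _ => r) fun _ => by simpa [π, eq_comm] using hz
    simpa [l, eq_comm] using hw ()
  refine ⟨ofKerLE π l hker, ⟨fun x hx => ⟨(⟨x, hx⟩, 0), by simp [π]⟩, fun x y hxy => ?_⟩,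
    ⟨(0, 1), by simp [π]⟩, ?_⟩
  · rw [ofKerLE_apply hker (z := (x, 0)) (by simp [π, hxy])]
    simp [l]
  · rintro ι κ _ _ t u ⟨q, hq⟩
    choose z hz using fun j => (u j).2
    obtain ⟨w, hw⟩ := exists_solution_of_forall_satisfiedBy hx₀ t q (fun j => (z j).1)
      (fun j => (z j).2) fun j => by simp [hq j, ← hz j, π]
    exact ⟨w, fun j => by rw [hw j, ofKerLE_apply hker (hz j)]; simp [l]⟩

theorem PreservesSolvability.exists_linearMap (hN : DCCOnPPSubgroups R N)
    (hφ : φ.PreservesSolvability) : ∃ g : P →ₗ[R] N, ∀ x : φ.domain, g x = φ x := by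
  obtain ⟨m, hφm, hm, hmax⟩ := zorn_le_nonempty₀ {ψ : P →ₗ.[R] N | ψ.PreservesSolvability}
    (fun c hc hchain ψ hψ => ⟨LinearPMap.sSup c hchain.directedOn,
      PreservesSolvability.sSup ⟨ψ, hψ⟩ hchain.directedOn hc, fun _ => LinearPMap.le_sSup _⟩) φ hφ
  have htop (x : P) : x ∈ m.domain := by
    obtain ⟨ψ, hmψ, hx, hψ⟩ := hm.exists_extension hN x
    exact (hmax hψ hmψ).1 hx
  exact ⟨m.toFun ∘ₗ LinearMap.codRestrict m.domain LinearMap.id htop,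
    fun x => (hφm.2 rfl).symm⟩

end LinearPMap

theorem LinearMap.IsPure.exists_retraction {R : Type u} [Ring R] {N P : Type*} [AddCommGroup N]
    [Module R N] [AddCommGroup P] [Module R P] (hN : DCCOnPPSubgroups R N) {f : N →ₗ[R] P}
    (hf : f.IsPure) : ∃ g : P →ₗ[R] N, g ∘ₗ f = LinearMap.id := by
  let e := LinearEquiv.ofInjective f hf.injective
  have hpres : LinearPMap.PreservesSolvability ⟨LinearMap.range f, e.symm.toLinearMap⟩ := by
    rintro ι κ _ _ t u ⟨q, hq⟩
    exact hf t (fun j => e.symm (u j)) ⟨q, fun j => by simp [e, hq j]⟩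
  obtain ⟨g, hg⟩ := hpres.exists_linearMap hN
  exact ⟨g, LinearMap.ext fun n => by simpa [e] using hg (e n)⟩

theorem stmt14 (R : Type u) [Ring R] (E : Type u) [AddCommGroup E] [Module R E]
    (J : Type u) (hJ : Cardinal.mk J = max (Cardinal.mk R) Cardinal.aleph0) :
    -- `E` is Σ-RD-injective, i.e. `E^(I)` is RD-injective for every set `I`,
    -- iff `E^(κ)` is RD-injective, where `κ = card R + ℵ₀`
    (∀ I : Type u, RDInjective R (DirectSum I fun _ => E)) ↔
      RDInjective R (DirectSum J fun _ => E) := by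
  classical
  refine ⟨fun h => h J, fun hEJ I => ?_⟩
  have : Infinite J := Cardinal.infinite_iff.2 (hJ ▸ le_max_right _ _)
  obtain ⟨j⟩ := ‹Infinite J›.nonempty
  have hE : RDInjective R E := hEJ.of_retract (lof R J (fun _ => E) j) (component R J _ j)
    (LinearMap.ext fun x => by simp)
  obtain ⟨ρ, hρ⟩ := isPure_coeFnLinearMap.exists_retraction
    ((DCCOnPPSubgroups.of_rdInjective_directSum hEJ).directSum I)
  exact (hE.pi I).of_retract _ ρ hρ
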